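/- For any r×r matrix H, the second derivative at t = 0 of t ↦ K_J(I_r + tH) equals 2·tr(H²), and the second derivative at t = 0 of t ↦ K_α(I_r + tH) equals (α − α²)·tr(H²). -/

import Mathlib

/-- Complex-valued Kullback–Leibler discrimination `K_I(A) = tr A − log det A − r`. -/
noncomputable def KIc {r : ℕ} (A : Matrix (Fin r) (Fin r) ℂ) : ℂ :=
  A.trace - Complex.log A.det - r

/-- The J-divergence `K_J(A) = K_I(A) + K_I(A⁻¹)`. -/
noncomputable def KJc {r : ℕ} (A : Matrix (Fin r) (Fin r) ℂ) : ℂ :=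
  KIc A + KIc A⁻¹

/-- The Chernoff information measure `K_α(A) = log det(αA + (1−α)I) − α log det A`. -/
noncomputable def Kalphac {r : ℕ} (α : ℝ) (A : Matrix (Fin r) (Fin r) ℂ) : ℂ :=
  Complex.log ((α : ℂ) • A + ((1 - α : ℝ) : ℂ) • (1 : Matrix (Fin r) (Fin r) ℂ)).det
    - (α : ℂ) * Complex.log A.det

/-!
Both functions are restrictions to the real axis of functions holomorphic near `z = 0` along the
complex line `z ↦ 1 + z • H`, so it suffices to differentiate twice in `z`. On the slit plane
`log det A⁻¹ = -log det A`, hence `K_J(1 + zH) = tr(1 + zH) + tr((1 + zH)⁻¹) - 2r`, and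
`d/dz (1 + zH)⁻¹ = -(1 + zH)⁻¹ H (1 + zH)⁻¹` gives `2 tr(H²)` at `0`. For `K_α`,
`α(1 + zH) + (1 - α)I = 1 + z(αH)`, and Jacobi's formula
`d/dz log det(1 + zM) = tr((1 + zM)⁻¹ M)` gives the second derivative `-tr(M²)` of each
log-determinant at `0`, hence `-α² tr(H²) + α tr(H²)`.
-/

open Matrix Complex Filter Topology

section Line

open scoped Matrix.Norms.Operator

variable {𝕜 : Type*} [RCLike 𝕜] {n : Type*} [Fintype n]

theorem HasDerivAt.matrix_trace {f : 𝕜 → Matrix n n 𝕜} {f' : Matrix n n 𝕜} {z : 𝕜}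
    (h : HasDerivAt f f' z) : HasDerivAt (fun w => (f w).trace) f'.trace z :=
  (traceLinearMap n 𝕜 𝕜).toContinuousLinearMap.hasFDerivAt.comp_hasDerivAt z h

variable [DecidableEq n]

theorem hasDerivAt_one_add_smul (M : Matrix n n 𝕜) (z : 𝕜) :
    HasDerivAt (fun w : 𝕜 => 1 + w • M) M z :=
  (((hasDerivAt_id z).smul_const M).const_add 1).congr_deriv (one_smul 𝕜 M)

theorem tendsto_det_one_add_smul (M : Matrix n n 𝕜) :
    Tendsto (fun z : 𝕜 => (1 + z • M).det) (𝓝 0) (𝓝 1) := by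
  have hcont : Continuous fun z : 𝕜 => (1 + z • M).det := by fun_prop
  simpa using hcont.tendsto 0

theorem eventually_isUnit_one_add_smul (M : Matrix n n 𝕜) :
    ∀ᶠ z in 𝓝 (0 : 𝕜), IsUnit (1 + z • M) :=
  ((tendsto_det_one_add_smul M).eventually_ne one_ne_zero).mono fun _ h =>
    (isUnit_iff_isUnit_det _).mpr h.isUnit

open Polynomial in
theorem hasDerivAt_det_one_add_smul_zero (M : Matrix n n 𝕜) :
    HasDerivAt (fun z : 𝕜 => (1 + z • M).det) M.trace 0 := by
  have h := (det (1 + (X : 𝕜[X]) • M.map C)).hasDerivAt 0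
  rw [derivative_det_one_add_X_smul] at h
  convert h using 1
  funext z
  simp [eval_det, ← smul_eq_mul_diagonal]

theorem hasDerivAt_det_one_add_smul (M : Matrix n n 𝕜) {z : 𝕜} (hz : IsUnit (1 + z • M)) :
    HasDerivAt (fun w : 𝕜 => (1 + w • M).det)
      ((1 + z • M).det * ((1 + z • M)⁻¹ * M).trace) z := by
  set A := 1 + z • M with hA
  have hfactor : ∀ w : 𝕜, 1 + w • M = A * (1 + (w - z) • (A⁻¹ * M)) := fun w => by
    rw [Matrix.mul_add, Matrix.mul_one, mul_smul_comm,
      mul_nonsing_inv_cancel_left _ _ ((isUnit_iff_isUnit_det A).mp hz), sub_smul, hA]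
    abel
  have h0 := hasDerivAt_det_one_add_smul_zero (A⁻¹ * M)
  rw [← sub_self z] at h0
  simp_rw [hfactor, det_mul]
  exact (h0.comp_sub_const z z).const_mul A.det

theorem hasDerivAt_inv_one_add_smul (M : Matrix n n 𝕜) {z : 𝕜} (hz : IsUnit (1 + z • M)) :
    HasDerivAt (fun w : 𝕜 => (1 + w • M)⁻¹) (-((1 + z • M)⁻¹ * M * (1 + z • M)⁻¹)) z := by
  have h := (hasFDerivAt_ringInverse (𝕜 := 𝕜) hz.unit).comp_hasDerivAt z
    (hasDerivAt_one_add_smul M z)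
  have hinv : ((hz.unit⁻¹ : (Matrix n n 𝕜)ˣ) : Matrix n n 𝕜) = (1 + z • M)⁻¹ := by
    simp [nonsing_inv_eq_ringInverse]
  simp only [Function.comp_def, ← nonsing_inv_eq_ringInverse, hinv] at h
  exact h

theorem hasDerivAt_trace_inv_one_add_smul (M : Matrix n n 𝕜) {z : 𝕜} (hz : IsUnit (1 + z • M)) :
    HasDerivAt (fun w : 𝕜 => ((1 + w • M)⁻¹).trace)
      (-((1 + z • M)⁻¹ * M * (1 + z • M)⁻¹).trace) z := by
  simpa using (hasDerivAt_inv_one_add_smul M hz).matrix_trace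

theorem hasDerivAt_trace_inv_one_add_smul_mul_zero (M : Matrix n n 𝕜) :
    HasDerivAt (fun z : 𝕜 => ((1 + z • M)⁻¹ * M).trace) (-(M * M).trace) 0 := by
  have h := ((hasDerivAt_inv_one_add_smul M (z := 0) (by simp)).mul_const M).matrix_trace
  simpa using h

theorem hasDerivAt_trace_inv_mul_inv_one_add_smul_zero (M : Matrix n n 𝕜) :
    HasDerivAt (fun z : 𝕜 => ((1 + z • M)⁻¹ * M * (1 + z • M)⁻¹).trace)
      (-(2 * (M * M).trace)) 0 := by
  have hinv := hasDerivAt_inv_one_add_smul M (z := 0) (by simp)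
  have h := ((hinv.mul_const M).mul hinv).matrix_trace
  simp only [zero_smul, add_zero, inv_one, Matrix.one_mul, Matrix.mul_one, Matrix.mul_neg,
    Matrix.neg_mul, trace_add, trace_neg] at h
  exact h.congr_deriv (by ring)

end Line

section LogDet

variable {n : Type*} [Fintype n] [DecidableEq n]

theorem eventually_det_one_add_smul_mem_slitPlane (M : Matrix n n ℂ) :
    ∀ᶠ z in 𝓝 (0 : ℂ), (1 + z • M).det ∈ slitPlane :=
  (tendsto_det_one_add_smul M).eventually (isOpen_slitPlane.mem_nhds one_mem_slitPlane)

theorem hasDerivAt_log_det_one_add_smul (M : Matrix n n ℂ) {z : ℂ}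
    (hz : (1 + z • M).det ∈ slitPlane) :
    HasDerivAt (fun w : ℂ => log (1 + w • M).det) ((1 + z • M)⁻¹ * M).trace z := by
  have hdet : (1 + z • M).det ≠ 0 := slitPlane_ne_zero hz
  have h := (hasDerivAt_det_one_add_smul M ((isUnit_iff_isUnit_det _).mpr hdet.isUnit)).clog hz
  rwa [mul_div_cancel_left₀ _ hdet] at h

end LogDet

theorem HasDerivAt.comp_ofReal' {E : Type*} [NormedAddCommGroup E] [NormedSpace ℂ E]
    {F : ℂ → E} {F' : E} {t : ℝ} (hF : HasDerivAt F F' t) :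
    HasDerivAt (fun s : ℝ => F s) F' t :=
  (hF.scomp t ofRealCLM.hasDerivAt).congr_deriv (by simp)

theorem iteratedDeriv_two_ofReal_eq {E : Type*} [NormedAddCommGroup E] [NormedSpace ℂ E]
    {F F' : ℂ → E} {c : E} (hF : ∀ᶠ z in 𝓝 (0 : ℂ), HasDerivAt F (F' z) z)
    (hF' : HasDerivAt F' c 0) :
    iteratedDeriv 2 (fun t : ℝ => F t) 0 = c := by
  have hderiv : deriv (fun t : ℝ => F t) =ᶠ[𝓝 0] fun t : ℝ => F' t := by
    filter_upwards [Complex.continuous_ofReal.tendsto' 0 0 ofReal_zero |>.eventually hF]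
      with t ht using ht.comp_ofReal'.deriv
  rw [iteratedDeriv_succ, iteratedDeriv_one, hderiv.deriv_eq]
  exact (HasDerivAt.comp_ofReal' (by rwa [ofReal_zero])).deriv

theorem KJc_eq_trace_add_trace_inv {r : ℕ} {A : Matrix (Fin r) (Fin r) ℂ}
    (hA : A.det ∈ slitPlane) : KJc A = A.trace + A⁻¹.trace - 2 * r := by
  rw [KJc, KIc, KIc, det_nonsing_inv, Ring.inverse_eq_inv', log_inv _ (slitPlane_arg_ne_pi hA)]
  ring

theorem Kalphac_one_add {r : ℕ} (α : ℝ) (A : Matrix (Fin r) (Fin r) ℂ) :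
    Kalphac α (1 + A) = log (1 + (α : ℂ) • A).det - α * log (1 + A).det := by
  rw [Kalphac, ofReal_sub, ofReal_one, smul_add, add_right_comm, ← add_smul]
  simp

theorem iteratedDeriv_two_KJc_one_add_smul {r : ℕ} (H : Matrix (Fin r) (Fin r) ℂ) :
    iteratedDeriv 2 (fun t : ℝ => KJc (1 + t • H)) 0 = 2 * (H * H).trace := by
  have hKJ : (fun t : ℝ => KJc (1 + t • H)) =ᶠ[𝓝 0]
      fun t : ℝ => (1 + (t : ℂ) • H).trace + ((1 + (t : ℂ) • H)⁻¹).trace - 2 * r := by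
    filter_upwards [(continuous_ofReal.tendsto' 0 0 ofReal_zero).eventually
      (eventually_det_one_add_smul_mem_slitPlane H)] with t ht
    rw [← coe_smul, KJc_eq_trace_add_trace_inv ht]
  rw [hKJ.iteratedDeriv_eq 2]
  refine iteratedDeriv_two_ofReal_eq
    (F := fun z => (1 + z • H).trace + ((1 + z • H)⁻¹).trace - 2 * r)
    (F' := fun z => H.trace - ((1 + z • H)⁻¹ * H * (1 + z • H)⁻¹).trace) ?_ ?_
  · filter_upwards [eventually_isUnit_one_add_smul H] with z hz
    exact (((hasDerivAt_one_add_smul H z).matrix_trace.add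
      (hasDerivAt_trace_inv_one_add_smul H hz)).sub_const _).congr_deriv (sub_eq_add_neg _ _).symm
  · exact ((hasDerivAt_const 0 H.trace).sub
      (hasDerivAt_trace_inv_mul_inv_one_add_smul_zero H)).congr_deriv (by ring)

theorem iteratedDeriv_two_Kalphac_one_add_smul {r : ℕ} (α : ℝ) (H : Matrix (Fin r) (Fin r) ℂ) :
    iteratedDeriv 2 (fun t : ℝ => Kalphac α (1 + t • H)) 0
      = ((α - α ^ 2 : ℝ) : ℂ) * (H * H).trace := by
  have hK : (fun t : ℝ => Kalphac α (1 + t • H)) = fun t : ℝ =>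
      log (1 + (t : ℂ) • ((α : ℂ) • H)).det - α * log (1 + (t : ℂ) • H).det := by
    funext t
    rw [← coe_smul, Kalphac_one_add, smul_comm]
  rw [hK]
  refine iteratedDeriv_two_ofReal_eq
    (F := fun z => log (1 + z • ((α : ℂ) • H)).det - α * log (1 + z • H).det)
    (F' := fun z =>
      ((1 + z • ((α : ℂ) • H))⁻¹ * ((α : ℂ) • H)).trace - α * ((1 + z • H)⁻¹ * H).trace) ?_ ?_
  · filter_upwards [eventually_det_one_add_smul_mem_slitPlane ((α : ℂ) • H),
      eventually_det_one_add_smul_mem_slitPlane H] with z h1 h2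
    exact (hasDerivAt_log_det_one_add_smul _ h1).sub
      ((hasDerivAt_log_det_one_add_smul H h2).const_mul _)
  · refine ((hasDerivAt_trace_inv_one_add_smul_mul_zero _).sub
      ((hasDerivAt_trace_inv_one_add_smul_mul_zero H).const_mul _)).congr_deriv ?_
    rw [smul_mul_smul_comm, trace_smul, smul_eq_mul]
    push_cast
    ring

theorem KJ_Kalpha_second_deriv_at_one_general {r : ℕ} (α : ℝ)
    (H : Matrix (Fin r) (Fin r) ℂ) :
    iteratedDeriv 2 (fun t : ℝ => KJc ((1 : Matrix (Fin r) (Fin r) ℂ) + t • H)) 0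
      = 2 * (H * H).trace ∧
    iteratedDeriv 2 (fun t : ℝ => Kalphac α ((1 : Matrix (Fin r) (Fin r) ℂ) + t • H)) 0
      = ((α - α ^ 2 : ℝ) : ℂ) * (H * H).trace :=
  ⟨iteratedDeriv_two_KJc_one_add_smul H, iteratedDeriv_two_Kalphac_one_add_smul α H⟩

/-- Second derivatives at the identity: `d²/dt² K_J(I + tH)|₀ = 2 tr(H²)` and
`d²/dt² K_α(I + tH)|₀ = (α − α²) tr(H²)`. -/
theorem KJ_Kalpha_second_deriv_at_one {r : ℕ} (α : ℝ) (hα : 0 < α) (hα1 : α < 1)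
    (H : Matrix (Fin r) (Fin r) ℂ) :
    iteratedDeriv 2 (fun t : ℝ => KJc ((1 : Matrix (Fin r) (Fin r) ℂ) + t • H)) 0
      = 2 * (H * H).trace ∧
    iteratedDeriv 2 (fun t : ℝ => Kalphac α ((1 : Matrix (Fin r) (Fin r) ℂ) + t • H)) 0
      = ((α - α ^ 2 : ℝ) : ℂ) * (H * H).trace :=
  KJ_Kalpha_second_deriv_at_one_general α H
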